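/- Invariant polynomials give Lie algebra cocycles: with g, h, pr, and curvature R as above, for any h-invariant symmetric polynomial P ∈ Sym^m(h^∨)^h, the cochain P(R) ∈ C^{2m}(g, h; ℝ) defined by composing Λ^m R with P is closed under the Chevalley-Eilenberg differential: ∂_Lie P(R) = 0. -/

import Mathlib

/-!
`c` is the alternation of `M b = P (R (b 0) (b 1), …, R (b (2m-2)) (b (2m-1)))`. Listing
`v i, v j` first and the other entries of `v` in the order `σ` matches the terms `(i < j, σ)` of
`∂c v` with the terms `(p, ρ)`, `ρ 0 < ρ (p + 1)`, of the alternating sum over `ρ` of `M` at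
`v ∘ ρ` with its first entry bracketed into slot `p` of the others. As `M` is odd in each slot,
the terms with `ρ 0 > ρ (p + 1)` contribute the same, so `2 ∂c v = -(full alternating sum)`.
Bracketing into the second entry of a pair gives, after a transposition, the same as bracketing
into the first; averaging over the 3-cycle of `ρ 0` and the pair turns this, by the Bianchi
identity `∑_cyc R ⁅x, y⁆ z = ∑_cyc ⁅pr x, R y z⁆`, into `P` with `⁅pr (v (ρ 0)), R …⁆` in one
slot, and summing over the slots gives zero by invariance of `P`.
-/

open Finset

noncomputable section

variable {g : Type*} [LieRing g] [LieAlgebra ℝ g]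

/-- Remove the indices i < j from the tuple v and prepend the bracket ⁅v i, v j⁆. -/
def pairTuple {n : ℕ} (v : Fin (n + 1) → g) (i j : Fin (n + 1)) : Fin n → g :=
  fun l =>
    if (l : ℕ) = 0 then ⁅v i, v j⁆
    else
      v ⟨(let m := (l : ℕ) - 1
          let p1 := if m < (i : ℕ) then m else m + 1
          if p1 < (j : ℕ) then p1 else p1 + 1) % (n + 1),
        Nat.mod_lt _ (Nat.succ_pos n)⟩

/-- The Chevalley-Eilenberg differential with trivial (ℝ) coefficients,
as a raw formula on n-cochains. -/
def ceDiffTriv (n : ℕ) (c : (Fin n → g) → ℝ) : (Fin (n + 1) → g) → ℝ :=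
  fun v =>
    ∑ i : Fin (n + 1), ∑ j : Fin (n + 1),
      if (i : ℕ) < (j : ℕ) then
        ((-1 : ℤ) ^ ((i : ℕ) + (j : ℕ))) • c (pairTuple v i j)
      else 0

open Equiv Equiv.Perm

section Curvature

variable {L H F : Type*} [LieRing L] [LieRing H] [FunLike F L H]

def curvature (pr : F) (x y : L) : H := ⁅pr x, pr y⁆ - pr ⁅x, y⁆

variable [AddMonoidHomClass F L H] (pr : F)

lemma curvature_swap (x y : L) : curvature pr y x = -curvature pr x y := by
  simp only [curvature, ← lie_skew x y, map_neg, ← lie_skew (pr x) (pr y)]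
  abel

lemma curvature_neg_left (x y : L) : curvature pr (-x) y = -curvature pr x y := by
  simp only [curvature, map_neg, neg_lie]
  abel

lemma curvature_neg_right (x y : L) : curvature pr x (-y) = -curvature pr x y := by
  simp only [curvature, map_neg, lie_neg]
  abel

/-- Both sides equal the cyclic sum of `⁅pr ⁅x, y⁆, pr z⁆`, by the Jacobi identity in `L`
and in `H` respectively. -/
lemma curvature_bianchi (x y z : L) :
    curvature pr ⁅x, y⁆ z + curvature pr ⁅y, z⁆ x + curvature pr ⁅z, x⁆ y =
      ⁅pr x, curvature pr y z⁆ + ⁅pr y, curvature pr z x⁆ + ⁅pr z, curvature pr x y⁆ := by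
  have jacobi_L : ⁅⁅x, y⁆, z⁆ + ⁅⁅y, z⁆, x⁆ + ⁅⁅z, x⁆, y⁆ = (0 : L) := by
    rw [← lie_skew ⁅x, y⁆ z, ← lie_skew ⁅y, z⁆ x, ← lie_skew ⁅z, x⁆ y]
    linear_combination (norm := abel) -lie_jacobi x y z
  replace jacobi_L := congrArg pr jacobi_L
  rw [map_add, map_add, map_zero] at jacobi_L
  have jacobi_H := lie_jacobi (pr x) (pr y) (pr z)
  simp only [curvature, lie_sub, ← lie_skew (pr ⁅_, _⁆) (pr _)]
  linear_combination (norm := abel) -jacobi_L - jacobi_H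

end Curvature

lemma Equiv.Perm.sum_sign_smul_mul_right {α M : Type*} [Fintype α] [DecidableEq α]
    [AddCommGroup M] (f : Perm α → M) (π : Perm α) :
    ∑ ρ, (sign ρ : ℤ) • f (ρ * π) = (sign π : ℤ) • ∑ ρ, (sign ρ : ℤ) • f ρ := by
  rw [Finset.smul_sum]
  refine Fintype.sum_equiv (Equiv.mulRight π) _ _ fun ρ => ?_
  rw [Equiv.coe_mulRight, Perm.sign_mul, Units.val_mul, smul_smul, mul_comm (sign ρ : ℤ),
    ← mul_assoc, Int.units_coe_mul_self, one_mul]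

section SuccPerm

def succPerm {n : ℕ} (σ : Perm (Fin n)) : Perm (Fin (n + 1)) := decomposeFin.symm (0, σ)

variable {n : ℕ}

@[simp] lemma succPerm_zero (σ : Perm (Fin n)) : succPerm σ 0 = 0 := by
  simp [succPerm]

@[simp] lemma succPerm_succ (σ : Perm (Fin n)) (k : Fin n) : succPerm σ k.succ = (σ k).succ := by
  simp [succPerm]

@[simp] lemma sign_succPerm (σ : Perm (Fin n)) : sign (succPerm σ) = sign σ := by
  simp [succPerm]

lemma succPerm_decomposeFin_snd {ρ : Perm (Fin (n + 1))} (hρ : ρ 0 = 0) :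
    succPerm (decomposeFin ρ).2 = ρ := by
  have hfst : (decomposeFin ρ).1 = 0 := by
    have := decomposeFin_symm_apply_zero (decomposeFin ρ).1 (decomposeFin ρ).2
    rwa [Prod.mk.eta, Equiv.symm_apply_apply, hρ, eq_comm] at this
  rw [succPerm, ← hfst, Prod.mk.eta, Equiv.symm_apply_apply]

lemma decomposeFin_succPerm (σ : Perm (Fin n)) : (decomposeFin (succPerm σ)).2 = σ := by
  simp [succPerm]

end SuccPerm

lemma Fin.val_succAbove_eq_ite {n : ℕ} (p : Fin (n + 1)) (k : Fin n) :
    (p.succAbove k : ℕ) = if (k : ℕ) < p then (k : ℕ) else k + 1 := by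
  split_ifs with h
  · rw [Fin.succAbove_of_castSucc_lt _ _ (by simpa [Fin.lt_def] using h), Fin.val_castSucc]
  · rw [Fin.succAbove_of_le_castSucc _ _ (by simpa [Fin.le_def] using h), Fin.val_succ]

section PairingPerm

variable {K : ℕ}

/-- For `i < j`, the permutation sending `0 ↦ i`, `1 ↦ j` and the remaining points increasingly
onto the complement of `{i, j}`. -/
def pairingPerm (i j : Fin (K + 2)) : Perm (Fin (K + 2)) :=
  (Fin.cycleRange i).symm * succPerm (Fin.cycleRange (Fin.predAbove 0 j)).symm

@[simp] lemma pairingPerm_zero (i j : Fin (K + 2)) : pairingPerm i j 0 = i := by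
  simp [pairingPerm, Perm.mul_apply]

lemma pairingPerm_one {i j : Fin (K + 2)} (hij : i < j) : pairingPerm i j 1 = j := by
  rw [← Fin.succ_zero_eq_one, pairingPerm, Perm.mul_apply, succPerm_succ,
    Fin.cycleRange_symm_zero, Fin.cycleRange_symm_succ,
    Fin.predAbove_zero_of_ne_zero (Fin.ne_zero_of_lt hij), Fin.succAbove_pred_of_lt _ _ hij]

lemma pairingPerm_succ_succ (i j : Fin (K + 2)) (k : Fin K) :
    pairingPerm i j k.succ.succ = i.succAbove ((Fin.predAbove 0 j).succAbove k) := by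
  simp [pairingPerm, Perm.mul_apply]

lemma sign_pairingPerm {i j : Fin (K + 2)} (hij : i < j) :
    (sign (pairingPerm i j) : ℤ) = -(-1) ^ ((i : ℕ) + j) := by
  have hj : (j : ℕ) = (Fin.predAbove 0 j : ℕ) + 1 := by
    rw [Fin.predAbove_zero_of_ne_zero (Fin.ne_zero_of_lt hij), Fin.val_pred]
    have : (i : ℕ) < j := hij
    omega
  rw [pairingPerm, Perm.sign_mul, sign_succPerm, sign_symm, sign_symm, Fin.sign_cycleRange,
    Fin.sign_cycleRange, hj]
  push_cast
  ring

end PairingPerm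

section BracketInsertion

variable {L : Type*} [LieRing L]

def bracketInsert {N : ℕ} (u : Fin (N + 1) → L) (p : Fin N) : Fin N → L :=
  Function.update (Fin.tail u) p ⁅u 0, u p.succ⁆

lemma bracketInsert_comp {N : ℕ} (u : Fin (N + 1) → L) (p : Fin N) (σ : Perm (Fin N)) :
    bracketInsert u p ∘ σ = bracketInsert (u ∘ succPerm σ) (σ⁻¹ p) := by
  rw [bracketInsert, bracketInsert, Function.update_comp_equiv]
  congr 1
  simp [Perm.inv_def]

lemma bracketInsert_comp_swap {N : ℕ} (u : Fin (N + 1) → L) (p : Fin N) :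
    bracketInsert (u ∘ swap 0 p.succ) p = Function.update (Fin.tail u) p (-⁅u 0, u p.succ⁆) := by
  ext k
  rcases eq_or_ne k p with rfl | hk
  · rw [bracketInsert, Function.update_self, Function.update_self, Function.comp_apply,
      Function.comp_apply, swap_apply_left, swap_apply_right, lie_skew]
  · simp [bracketInsert, hk, Fin.tail, swap_apply_of_ne_of_ne (Fin.succ_ne_zero k)
      (Fin.succ_injective _ |>.ne hk)]

lemma pairTuple_eq_bracketInsert {K : ℕ} (v : Fin (K + 2) → L) {i j : Fin (K + 2)}
    (hij : i < j) : pairTuple v i j = bracketInsert (v ∘ pairingPerm i j) 0 := by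
  funext l
  cases l using Fin.cases with
  | zero =>
    rw [bracketInsert, Function.update_self, Function.comp_apply, Function.comp_apply,
      Fin.succ_zero_eq_one, pairingPerm_zero, pairingPerm_one hij]
    simp [pairTuple]
  | succ k =>
    have hj : (Fin.predAbove 0 j : ℕ) = j - 1 := by
      rw [Fin.predAbove_zero_of_ne_zero (Fin.ne_zero_of_lt hij), Fin.val_pred]
    have : (i : ℕ) < j := hij
    simp only [pairTuple, bracketInsert, Fin.val_succ, Nat.add_one_ne_zero, if_false,
      Nat.add_sub_cancel, Function.update_of_ne (Fin.succ_ne_zero k), Fin.tail,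
      Function.comp_apply, pairingPerm_succ_succ]
    congr 1
    ext
    simp only [Fin.val_succAbove_eq_ite, hj]
    rw [Nat.mod_eq_of_lt (by split_ifs <;> omega)]
    split_ifs <;> omega

end BracketInsertion

section Differential

variable {L : Type*} [LieRing L] {K : ℕ}

lemma pairTuple_comp_eq_bracketInsert (v : Fin (K + 2) → L) {i j : Fin (K + 2)} (hij : i < j)
    (σ : Perm (Fin (K + 1))) :
    pairTuple v i j ∘ σ = bracketInsert (v ∘ ⇑(pairingPerm i j * succPerm σ)) (σ⁻¹ 0) := by
  rw [pairTuple_eq_bracketInsert v hij, bracketInsert_comp, Perm.coe_mul, Function.comp_assoc]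

lemma pairingPerm_mul_succPerm_apply_zero (i j : Fin (K + 2)) (σ : Perm (Fin (K + 1))) :
    (pairingPerm i j * succPerm σ) 0 = i := by
  rw [Perm.mul_apply, succPerm_zero, pairingPerm_zero]

lemma pairingPerm_mul_succPerm_apply_succ {i j : Fin (K + 2)} (hij : i < j)
    (σ : Perm (Fin (K + 1))) : (pairingPerm i j * succPerm σ) (σ⁻¹ 0).succ = j := by
  rw [Perm.mul_apply, succPerm_succ, Perm.coe_inv, apply_symm_apply, Fin.succ_zero_eq_one,
    pairingPerm_one hij]

def unpairPerm (p : Fin (K + 1)) (ρ : Perm (Fin (K + 2))) : Perm (Fin (K + 1)) :=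
  (decomposeFin ((pairingPerm (ρ 0) (ρ p.succ))⁻¹ * ρ)).2

lemma pairingPerm_mul_succPerm_unpairPerm (p : Fin (K + 1)) (ρ : Perm (Fin (K + 2))) :
    pairingPerm (ρ 0) (ρ p.succ) * succPerm (unpairPerm p ρ) = ρ := by
  rw [unpairPerm, succPerm_decomposeFin_snd (by rw [Perm.mul_apply, Perm.inv_eq_iff_eq,
    pairingPerm_zero]), mul_inv_cancel_left]

lemma unpairPerm_inv_apply_zero {p : Fin (K + 1)} {ρ : Perm (Fin (K + 2))}
    (hρ : ρ 0 < ρ p.succ) : (unpairPerm p ρ)⁻¹ 0 = p := by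
  rw [Perm.inv_eq_iff_eq]
  apply Fin.succ_injective
  rw [← succPerm_succ, ← (pairingPerm _ _).injective.eq_iff, ← Perm.mul_apply,
    pairingPerm_mul_succPerm_unpairPerm, Fin.succ_zero_eq_one, pairingPerm_one hρ]

lemma unpairPerm_pairingPerm_mul_succPerm {i j : Fin (K + 2)} (hij : i < j)
    (σ : Perm (Fin (K + 1))) : unpairPerm (σ⁻¹ 0) (pairingPerm i j * succPerm σ) = σ := by
  rw [unpairPerm, pairingPerm_mul_succPerm_apply_zero, pairingPerm_mul_succPerm_apply_succ hij,
    inv_mul_cancel_left, decomposeFin_succPerm]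

theorem ceDiffTriv_alternation (M : (Fin (K + 1) → L) → ℝ) (v : Fin (K + 2) → L) :
    ceDiffTriv (K + 1) (fun a => ∑ σ : Perm (Fin (K + 1)), (sign σ : ℤ) • M (a ∘ σ)) v =
      -∑ p : Fin (K + 1), ∑ ρ : Perm (Fin (K + 2)),
        if ρ 0 < ρ p.succ then (sign ρ : ℤ) • M (bracketInsert (v ∘ ρ) p) else 0 := by
  calc ceDiffTriv (K + 1) (fun a => ∑ σ : Perm (Fin (K + 1)), (sign σ : ℤ) • M (a ∘ σ)) v
      = ∑ x ∈ univ.filter fun x : (Fin (K + 2) × Fin (K + 2)) × Perm (Fin (K + 1)) =>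
            x.1.1 < x.1.2,
          ((-1) ^ ((x.1.1 : ℕ) + x.1.2) * (sign x.2 : ℤ)) • M (pairTuple v x.1.1 x.1.2 ∘ x.2) := by
        rw [Finset.sum_filter, Fintype.sum_prod_type, Fintype.sum_prod_type]
        refine Finset.sum_congr rfl fun i _ => Finset.sum_congr rfl fun j _ => ?_
        simp only [Fin.val_fin_lt, Finset.smul_sum, mul_smul]
        split_ifs <;> simp
    _ = ∑ y ∈ univ.filter fun y : Fin (K + 1) × Perm (Fin (K + 2)) => y.2 0 < y.2 y.1.succ,
          -((sign y.2 : ℤ) • M (bracketInsert (v ∘ y.2) y.1)) := by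
        refine Finset.sum_bij' (fun x _ => (x.2⁻¹ 0, pairingPerm x.1.1 x.1.2 * succPerm x.2))
          (fun y _ => ((y.2 0, y.2 y.1.succ), unpairPerm y.1 y.2)) ?_ ?_ ?_ ?_ ?_
        · rintro ⟨⟨i, j⟩, σ⟩ hij
          simp only [Finset.mem_filter, Finset.mem_univ, true_and] at hij ⊢
          rwa [pairingPerm_mul_succPerm_apply_zero, pairingPerm_mul_succPerm_apply_succ hij]
        · rintro ⟨p, ρ⟩ hρ
          simpa using hρ
        · rintro ⟨⟨i, j⟩, σ⟩ hij
          simp only [Finset.mem_filter, Finset.mem_univ, true_and] at hij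
          simp only [pairingPerm_mul_succPerm_apply_zero, pairingPerm_mul_succPerm_apply_succ hij,
            unpairPerm_pairingPerm_mul_succPerm hij]
        · rintro ⟨p, ρ⟩ hρ
          simp only [Finset.mem_filter, Finset.mem_univ, true_and] at hρ
          simp only [unpairPerm_inv_apply_zero hρ, pairingPerm_mul_succPerm_unpairPerm]
        · rintro ⟨⟨i, j⟩, σ⟩ hij
          simp only [Finset.mem_filter, Finset.mem_univ, true_and] at hij
          rw [pairTuple_comp_eq_bracketInsert v hij, Perm.sign_mul, Units.val_mul,
            sign_succPerm, sign_pairingPerm hij, neg_mul, neg_smul, neg_neg]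
    _ = _ := by
        rw [Finset.sum_filter, Fintype.sum_prod_type, ← Finset.sum_neg_distrib]
        refine Finset.sum_congr rfl fun p _ => ?_
        rw [← Finset.sum_neg_distrib]
        refine Finset.sum_congr rfl fun ρ _ => ?_
        split_ifs <;> simp

end Differential

section Halving

variable {L : Type*} [LieRing L] {N : ℕ}

/-- Right multiplication by `swap 0 p.succ` exchanges the two halves of the sum. -/
lemma two_mul_sum_ite_lt_bracketInsert (M : (Fin N → L) → ℝ)
    (hM : ∀ b k x, M (Function.update b k (-x)) = -M (Function.update b k x))
    (v : Fin (N + 1) → L) (p : Fin N) :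
    2 * ∑ ρ : Perm (Fin (N + 1)),
        (if ρ 0 < ρ p.succ then (sign ρ : ℤ) • M (bracketInsert (v ∘ ρ) p) else 0) =
      ∑ ρ : Perm (Fin (N + 1)), (sign ρ : ℤ) • M (bracketInsert (v ∘ ρ) p) := by
  set s := swap (0 : Fin (N + 1)) p.succ
  have hs : (0 : Fin (N + 1)) ≠ p.succ := (Fin.succ_ne_zero p).symm
  have hterm : ∀ ρ : Perm (Fin (N + 1)),
      (sign (ρ * s) : ℤ) • M (bracketInsert (v ∘ ⇑(ρ * s)) p) =
        (sign ρ : ℤ) • M (bracketInsert (v ∘ ρ) p) := by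
    intro ρ
    rw [Perm.coe_mul, ← Function.comp_assoc, bracketInsert_comp_swap, hM, Perm.sign_mul,
      sign_swap hs, bracketInsert]
    simp
  have hlt : ∀ ρ : Perm (Fin (N + 1)), (ρ * s) 0 < (ρ * s) p.succ ↔ ¬ρ 0 < ρ p.succ := by
    intro ρ
    rw [Perm.mul_apply, Perm.mul_apply, swap_apply_left, swap_apply_right, not_lt,
      lt_iff_le_and_ne, and_iff_left (ρ.injective.ne hs.symm)]
  rw [two_mul]
  nth_rewrite 2 [← Fintype.sum_equiv (Equiv.mulRight s) (fun ρ => _) _ fun ρ => rfl]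
  rw [← Finset.sum_add_distrib]
  refine Finset.sum_congr rfl fun ρ _ => ?_
  simp only [coe_mulRight, hlt, hterm]
  split_ifs <;> simp

theorem two_mul_ceDiffTriv_alternation (M : (Fin N → L) → ℝ)
    (hM : ∀ b k x, M (Function.update b k (-x)) = -M (Function.update b k x))
    (v : Fin (N + 1) → L) :
    2 * ceDiffTriv N (fun a => ∑ σ : Perm (Fin N), (sign σ : ℤ) • M (a ∘ σ)) v =
      -∑ p : Fin N, ∑ ρ : Perm (Fin (N + 1)), (sign ρ : ℤ) • M (bracketInsert (v ∘ ρ) p) := by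
  cases N with
  | zero => simp [ceDiffTriv, Subsingleton.elim _ (0 : Fin 1)]
  | succ K =>
    rw [ceDiffTriv_alternation, mul_neg, Finset.mul_sum]
    simp only [two_mul_sum_ite_lt_bracketInsert M hM]

end Halving

section Pairs

variable {m : ℕ}

def pairFst (l : Fin m) : Fin (2 * m) := ⟨2 * l, by omega⟩

def pairSnd (l : Fin m) : Fin (2 * m) := ⟨2 * l + 1, by omega⟩

lemma pairFst_ne_pairSnd (k l : Fin m) : pairFst k ≠ pairSnd l :=
  Fin.ne_of_val_ne (by simp only [pairFst, pairSnd]; omega)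

lemma pairFst_injective : Function.Injective (pairFst (m := m)) :=
  fun k l h => Fin.ext (by simpa [pairFst, Fin.ext_iff] using h)

lemma pairSnd_injective : Function.Injective (pairSnd (m := m)) :=
  fun k l h => Fin.ext (by simpa [pairSnd, Fin.ext_iff] using h)

lemma exists_eq_pairFst_or_eq_pairSnd (k : Fin (2 * m)) : ∃ l, k = pairFst l ∨ k = pairSnd l :=
  ⟨⟨k / 2, by omega⟩, by simp only [pairFst, pairSnd, Fin.ext_iff]; omega⟩

lemma sum_eq_sum_pairFst_add_pairSnd {M : Type*} [AddCommMonoid M] (f : Fin (2 * m) → M) :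
    ∑ k, f k = ∑ l, (f (pairFst l) + f (pairSnd l)) := by
  rw [← Fintype.sum_equiv (finProdFinEquiv.trans (finCongr (mul_comm m 2))) (fun x => _) f
    fun _ => rfl, Fintype.sum_prod_type]
  refine Finset.sum_congr rfl fun l _ => ?_
  rw [Fin.sum_univ_two]
  congr 2 <;> ext <;> simp [pairFst, pairSnd, add_comm]

end Pairs

section ChernWeil

variable {L H F : Type*} [LieRing L] [LieRing H] [FunLike F L H] (pr : F) {m : ℕ}

def curvaturePairs (b : Fin (2 * m) → L) : Fin m → H :=
  fun l => curvature pr (b (pairFst l)) (b (pairSnd l))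

lemma curvaturePairs_update_pairFst (b : Fin (2 * m) → L) (l : Fin m) (x : L) :
    curvaturePairs pr (Function.update b (pairFst l) x) =
      Function.update (curvaturePairs pr b) l (curvature pr x (b (pairSnd l))) := by
  ext k
  rcases eq_or_ne k l with rfl | hk
  · simp [curvaturePairs, (pairFst_ne_pairSnd k k).symm]
  · simp [curvaturePairs, hk, pairFst_injective.ne hk, (pairFst_ne_pairSnd l k).symm]

lemma curvaturePairs_update_pairSnd (b : Fin (2 * m) → L) (l : Fin m) (x : L) :
    curvaturePairs pr (Function.update b (pairSnd l) x) =
      Function.update (curvaturePairs pr b) l (curvature pr (b (pairFst l)) x) := by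
  ext k
  rcases eq_or_ne k l with rfl | hk
  · simp [curvaturePairs, pairFst_ne_pairSnd k k]
  · simp [curvaturePairs, hk, pairSnd_injective.ne hk, pairFst_ne_pairSnd k l]

lemma update_curvaturePairs_tail_comp_mul (v : Fin (2 * m + 1) → L) (l : Fin m)
    {π : Perm (Fin (2 * m + 1))}
    (hπ : π.support ⊆ {0, (pairFst l).succ, (pairSnd l).succ}) (ρ : Perm (Fin (2 * m + 1)))
    (x : H) :
    Function.update (curvaturePairs pr (Fin.tail (v ∘ ⇑(ρ * π)))) l x =
      Function.update (curvaturePairs pr (Fin.tail (v ∘ ρ))) l x := by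
  have hfix : ∀ k ≠ l, π (pairFst k).succ = (pairFst k).succ ∧
      π (pairSnd k).succ = (pairSnd k).succ := by
    intro k hk
    have hkl : (k : ℕ) ≠ l := Fin.val_ne_of_ne hk
    constructor <;>
    · refine Perm.notMem_support.mp fun hmem => ?_
      have := hπ hmem
      simp only [Finset.mem_insert, Finset.mem_singleton, Fin.ext_iff, Fin.val_succ, pairFst,
        pairSnd, Fin.val_zero] at this
      omega
  ext k
  rcases eq_or_ne k l with rfl | hk
  · simp
  · simp [hk, curvaturePairs, Fin.tail, hfix k hk]

variable [Module ℝ H] (P : MultilinearMap ℝ (fun _ : Fin m => H) ℝ) (v : Fin (2 * m + 1) → L)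
  (l : Fin m)

def slotSum (X : L → L → L → H) : ℝ :=
  ∑ ρ : Perm (Fin (2 * m + 1)), (sign ρ : ℤ) • P (Function.update
    (curvaturePairs pr (Fin.tail (v ∘ ρ))) l
    (X (v (ρ 0)) (v (ρ (pairFst l).succ)) (v (ρ (pairSnd l).succ))))

lemma slotSum_add (X Y : L → L → L → H) :
    slotSum pr P v l (fun x y z => X x y z + Y x y z) =
      slotSum pr P v l X + slotSum pr P v l Y := by
  simp only [slotSum, ← Finset.sum_add_distrib, ← smul_add, P.map_update_add]

lemma slotSum_neg (X : L → L → L → H) :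
    slotSum pr P v l (fun x y z => -X x y z) = -slotSum pr P v l X := by
  simp only [slotSum, ← Finset.sum_neg_distrib, ← smul_neg, P.map_update_neg]

lemma slotSum_swap (X : L → L → L → H) :
    slotSum pr P v l (fun x y z => X x z y) = -slotSum pr P v l X := by
  set a := (pairFst l).succ
  set b := (pairSnd l).succ
  have hab : a ≠ b := (Fin.succ_injective _).ne (pairFst_ne_pairSnd l l)
  have hsupp : (swap a b).support ⊆ ({0, a, b} : Finset (Fin (2 * m + 1))) := by
    rw [support_swap hab]
    exact Finset.subset_insert 0 {a, b}
  have h0 : swap a b 0 = 0 :=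
    swap_apply_of_ne_of_ne (Fin.succ_ne_zero _).symm (Fin.succ_ne_zero _).symm
  have key := sum_sign_smul_mul_right (fun ρ => P (Function.update
    (curvaturePairs pr (Fin.tail (v ∘ ρ))) l (X (v (ρ 0)) (v (ρ a)) (v (ρ b))))) (swap a b)
  simp only [sign_swap hab, Units.val_neg, Units.val_one, neg_one_smul] at key
  rw [slotSum, slotSum, ← key]
  refine Finset.sum_congr rfl fun ρ _ => ?_
  rw [update_curvaturePairs_tail_comp_mul pr v l hsupp]
  simp only [Perm.mul_apply, h0, swap_apply_left, swap_apply_right]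
  rfl

lemma slotSum_cycle (X : L → L → L → H) :
    slotSum pr P v l (fun x y z => X y z x) = slotSum pr P v l X := by
  set a := (pairFst l).succ
  set b := (pairSnd l).succ
  have hab : a ≠ b := (Fin.succ_injective _).ne (pairFst_ne_pairSnd l l)
  have h0a : (0 : Fin (2 * m + 1)) ≠ a := (Fin.succ_ne_zero _).symm
  have h0b : (0 : Fin (2 * m + 1)) ≠ b := (Fin.succ_ne_zero _).symm
  set c := swap 0 a * swap a b
  have hsupp : c.support ⊆ ({0, a, b} : Finset (Fin (2 * m + 1))) := by
    refine (support_mul_le _ _).trans ?_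
    rw [support_swap h0a, support_swap hab]
    intro x
    simp +contextual
  have hsign : sign c = 1 := by simp [c, sign_swap h0a, sign_swap hab]
  have key := sum_sign_smul_mul_right (fun ρ => P (Function.update
    (curvaturePairs pr (Fin.tail (v ∘ ρ))) l (X (v (ρ 0)) (v (ρ a)) (v (ρ b))))) c
  simp only [hsign, Units.val_one, one_smul] at key
  rw [slotSum, slotSum, ← key]
  refine Finset.sum_congr rfl fun ρ _ => ?_
  rw [update_curvaturePairs_tail_comp_mul pr v l hsupp]
  simp only [c, Perm.mul_apply, swap_apply_of_ne_of_ne h0a h0b, swap_apply_left,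
    swap_apply_right, swap_apply_of_ne_of_ne h0b.symm hab.symm]
  rfl

variable [AddMonoidHomClass F L H]

lemma map_curvaturePairs_update_neg (b : Fin (2 * m) → L) (k : Fin (2 * m)) (x : L) :
    P (curvaturePairs pr (Function.update b k (-x))) =
      -P (curvaturePairs pr (Function.update b k x)) := by
  obtain ⟨l, rfl | rfl⟩ := exists_eq_pairFst_or_eq_pairSnd k
  · rw [curvaturePairs_update_pairFst, curvaturePairs_update_pairFst, curvature_neg_left,
      P.map_update_neg]
  · rw [curvaturePairs_update_pairSnd, curvaturePairs_update_pairSnd, curvature_neg_right,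
      P.map_update_neg]

lemma slotSum_curvature_lie_right :
    slotSum pr P v l (fun x y z => curvature pr y ⁅x, z⁆) =
      slotSum pr P v l (fun x y z => curvature pr ⁅x, y⁆ z) := by
  have hswap := slotSum_swap pr P v l (fun x y z => curvature pr ⁅x, y⁆ z)
  calc slotSum pr P v l (fun x y z => curvature pr y ⁅x, z⁆)
      = slotSum pr P v l (fun x y z => -curvature pr ⁅x, z⁆ y) := by
        simp only [curvature_swap pr ⁅_, _⁆ (_ : L)]
    _ = _ := by rw [slotSum_neg, hswap, neg_neg]

lemma slotSum_curvature_lie_left :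
    slotSum pr P v l (fun x y z => curvature pr ⁅x, y⁆ z) =
      slotSum pr P v l (fun x y z => ⁅pr x, curvature pr y z⁆) := by
  have hcyclic : ∀ X : L → L → L → H,
      3 • slotSum pr P v l X = slotSum pr P v l (fun x y z => X x y z + X y z x + X z x y) := by
    intro X
    have hcycle := slotSum_cycle pr P v l X
    have hcycle' := slotSum_cycle pr P v l (fun x y z => X z x y)
    rw [slotSum_add, slotSum_add, hcycle, ← hcycle']
    abel
  refine smul_right_injective ℝ (three_ne_zero (α := ℕ)) ?_
  simp only [hcyclic, curvature_bianchi]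

theorem sum_sum_sign_smul_map_curvaturePairs_bracketInsert_eq_zero
    (hinv : ∀ (x : H) (w : Fin m → H), ∑ i : Fin m, P (Function.update w i ⁅x, w i⁆) = 0) :
    ∑ p : Fin (2 * m), ∑ ρ : Perm (Fin (2 * m + 1)),
      (sign ρ : ℤ) • P (curvaturePairs pr (bracketInsert (v ∘ ρ) p)) = 0 := by
  have hslots : ∀ l : Fin m,
      ∑ ρ : Perm (Fin (2 * m + 1)),
          (sign ρ : ℤ) • P (curvaturePairs pr (bracketInsert (v ∘ ρ) (pairFst l))) +
        ∑ ρ : Perm (Fin (2 * m + 1)),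
          (sign ρ : ℤ) • P (curvaturePairs pr (bracketInsert (v ∘ ρ) (pairSnd l))) =
      2 * slotSum pr P v l (fun x y z => ⁅pr x, curvature pr y z⁆) := by
    intro l
    calc _ = slotSum pr P v l (fun x y z => curvature pr ⁅x, y⁆ z) +
          slotSum pr P v l (fun x y z => curvature pr y ⁅x, z⁆) := by
          simp only [bracketInsert, curvaturePairs_update_pairFst, curvaturePairs_update_pairSnd]
          rfl
      _ = _ := by
          rw [slotSum_curvature_lie_right, slotSum_curvature_lie_left]
          exact (two_mul _).symm
  have hinvariance :
      ∑ l : Fin m, slotSum pr P v l (fun x y z => ⁅pr x, curvature pr y z⁆) = 0 := by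
    simp only [slotSum]
    rw [Finset.sum_comm]
    refine Finset.sum_eq_zero fun ρ _ => ?_
    rw [← Finset.smul_sum]
    exact smul_eq_zero_of_right _ (hinv (pr (v (ρ 0))) (curvaturePairs pr (Fin.tail (v ∘ ρ))))
  rw [sum_eq_sum_pairFst_add_pairSnd, Finset.sum_congr rfl fun l _ => hslots l,
    ← Finset.mul_sum, hinvariance, mul_zero]

end ChernWeil

/-- **The Chern-Weil cochain of an h-invariant symmetric polynomial applied to the
curvature of an h-equivariant projection is a Lie algebra cocycle:**
∂_Lie P(R) = 0. -/
theorem chern_weil_cocycle (h : LieSubalgebra ℝ g) (pr : g →ₗ[ℝ] h)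
    (m : ℕ) (P : MultilinearMap ℝ (fun _ : Fin m => (h : Type _)) ℝ)
    (hinv : ∀ (x : h) (w : Fin m → h),
      ∑ i : Fin m, P (Function.update w i ⁅x, w i⁆) = 0)
    (c : (Fin (2 * m) → g) → ℝ)
    (hc : ∀ a : Fin (2 * m) → g,
      c a = ∑ σ : Equiv.Perm (Fin (2 * m)),
        ((Equiv.Perm.sign σ : ℤ)) •
          P (fun l : Fin m =>
            ⁅pr (a (σ ⟨2 * (l : ℕ), by have := l.isLt; omega⟩)),
              pr (a (σ ⟨2 * (l : ℕ) + 1, by have := l.isLt; omega⟩))⁆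
            - pr ⁅a (σ ⟨2 * (l : ℕ), by have := l.isLt; omega⟩),
                a (σ ⟨2 * (l : ℕ) + 1, by have := l.isLt; omega⟩)⁆)) :
    ∀ v : Fin (2 * m + 1) → g, ceDiffTriv (2 * m) c v = 0 := by
  intro v
  have hc' : c = fun a => ∑ σ : Perm (Fin (2 * m)), (sign σ : ℤ) • P (curvaturePairs pr (a ∘ σ)) :=
    funext hc
  have hdiff := two_mul_ceDiffTriv_alternation (fun b => P (curvaturePairs pr b))
    (map_curvaturePairs_update_neg pr P) v
  rw [← hc', sum_sum_sign_smul_map_curvaturePairs_bracketInsert_eq_zero pr P v hinv,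
    neg_zero] at hdiff
  exact (mul_eq_zero.mp hdiff).resolve_left two_ne_zero

end
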